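/- Let n ≥ 1 and suppose V, R : [n+2, ∞) → ℝ are differentiable, V(c) > 0, 0 ≤ R(c) ≤ (n/2)·V(c), and (n/2)·V(c) − R(c) = c·V'(c) − R'(c). If ∫_{n+2}^∞ R(c)/(c·V(c)) dc < ∞, then lim_{c→∞} V(c)/c^(n/2) exists and is strictly positive; in fact V(c)/c^(n/2) ≥ P(n+2)·exp(−2∫_{n+2}^∞ R(t)/(t·V(t)) dt) for all large c, where P(c) = V(c)/c^(n/2) − R(c)/c^(n/2+1). -/

import Mathlib

/-!
With P(c) = V(c)/c^{n/2} − R(c)/c^{n/2+1}, the ODE gives P' = R·(n/2 + 1 − c)/c^{n/2+2} ≤ 0,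
so P is non-increasing on [n+2, ∞). Since R ≤ (n/2)V ≤ cV/2 we have V/c^{n/2} ≤ 2P, hence
P' ≥ −R/c^{n/2+1} ≥ −2NP with N = R/(cV). Thus P·exp(2∫_{n+2}^c N) is non-decreasing
(Grönwall), so P(c) ≥ P(n+2)·exp(−2∫N) > 0 and P decreases to a positive limit. Finally
V/c^{n/2} − P = R/c^{n/2+1} ≤ n·P(n+2)/c → 0.
-/

open Real Filter MeasureTheory Set Topology

theorem AntitoneOn.exists_tendsto_atTop_of_le {f : ℝ → ℝ} {a K : ℝ}
    (hf : AntitoneOn f (Ici a)) (hK : ∀ c ≥ a, K ≤ f c) : ∃ L, Tendsto f atTop (𝓝 L) ∧ K ≤ L := by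
  have hanti : Antitone fun c => f (max c a) := fun c d hcd =>
    hf (le_max_right c a) (le_max_right d a) (max_le_max hcd le_rfl)
  have hbdd : BddBelow (range fun c => f (max c a)) := by
    refine ⟨K, ?_⟩
    rintro _ ⟨c, rfl⟩
    exact hK _ (le_max_right c a)
  refine ⟨_, (tendsto_atTop_ciInf hanti hbdd).congr' ?_,
    le_ciInf fun c => hK _ (le_max_right c a)⟩
  filter_upwards [eventually_ge_atTop a] with c hc
  rw [max_eq_left hc]

theorem MeasureTheory.IntegrableOn.exists_primitive_le_integral_Ioi {g : ℝ → ℝ} {a : ℝ}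
    (hg : IntegrableOn g (Ioi a)) (hg_cont : ∀ c > a, ContinuousAt g c)
    (hg_nonneg : ∀ c > a, 0 ≤ g c) :
    ∃ F : ℝ → ℝ, Continuous F ∧ F a = 0 ∧ (∀ c > a, HasDerivAt F (g c) c) ∧
      ∀ c ≥ a, F c ≤ ∫ t in Ioi a, g t := by
  set G := (Ioi a).indicator g
  have hG : Integrable G := (integrable_indicator_iff measurableSet_Ioi).2 hg
  have hG_nonneg : ∀ t, 0 ≤ G t := fun t => indicator_nonneg (fun t ht => hg_nonneg t ht) t
  refine ⟨fun c => ∫ t in a..c, G t, hG.continuous_primitive a, intervalIntegral.integral_same,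
    fun c hc => ?_, fun c hc => ?_⟩
  · have hGg : G =ᶠ[𝓝 c] g := eventuallyEq_of_mem (isOpen_Ioi.mem_nhds hc)
      fun t ht => indicator_of_mem ht g
    rw [← hGg.eq_of_nhds]
    exact intervalIntegral.integral_hasDerivAt_right hG.intervalIntegrable
      hG.aestronglyMeasurable.stronglyMeasurableAtFilter ((hg_cont c hc).congr hGg.symm)
  · change ∫ t in a..c, G t ≤ _
    rw [intervalIntegral.integral_of_le hc, ← integral_indicator measurableSet_Ioi]
    exact setIntegral_le_integral hG (ae_of_all _ hG_nonneg)

theorem mul_exp_neg_integral_Ioi_le {P P' g : ℝ → ℝ} {a c : ℝ}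
    (hP : ∀ x ≥ a, HasDerivAt P (P' x) x) (hg : IntegrableOn g (Ioi a))
    (hg_cont : ∀ x > a, ContinuousAt g x) (hg_nonneg : ∀ x > a, 0 ≤ g x)
    (hP' : ∀ x > a, -(g x * P x) ≤ P' x) (hPa : 0 ≤ P a) (hc : a ≤ c) :
    P a * exp (-∫ t in Ioi a, g t) ≤ P c := by
  obtain ⟨F, hF_cont, hFa, hF_deriv, hF_le⟩ :=
    hg.exists_primitive_le_integral_Ioi hg_cont hg_nonneg
  have hmono : MonotoneOn (fun x => P x * exp (F x)) (Ici a) := by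
    refine monotoneOn_of_hasDerivWithinAt_nonneg (convex_Ici a)
      (f' := fun x => (P' x + g x * P x) * exp (F x))
      (fun x hx => ((hP x hx).continuousAt.mul hF_cont.rexp.continuousAt).continuousWithinAt)
      (fun x hx => ?_) (fun x hx => ?_) <;> rw [interior_Ici] at hx
    · exact ((hP x hx.le).mul (hF_deriv x hx).exp).hasDerivWithinAt.congr_deriv (by ring)
    · exact mul_nonneg (by linarith [hP' x hx]) (exp_pos _).le
  have hPac : P a ≤ P c * exp (F c) := by
    simpa [hFa] using hmono self_mem_Ici hc hc
  calc P a * exp (-∫ t in Ioi a, g t) ≤ P a * exp (-F c) := by gcongr; exact hF_le c hc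
    _ ≤ P c * exp (F c) * exp (-F c) := by gcongr
    _ = P c := by rw [mul_assoc, ← exp_add, add_neg_cancel, exp_zero, mul_one]

namespace ChowLuYang

noncomputable def P (n : ℝ) (V R : ℝ → ℝ) (c : ℝ) : ℝ :=
  V c / c ^ (n / 2) - R c / c ^ (n / 2 + 1)

variable {n c : ℝ} {V R : ℝ → ℝ}

lemma P_eq_div_rpow (hc : 0 < c) : P n V R c = (V c - R c / c) / c ^ (n / 2) := by
  have := (rpow_pos_of_pos hc (n / 2)).ne'
  rw [P, rpow_add_one hc.ne']
  field_simp

lemma P_le_div_rpow (hc : 0 < c) (hR : 0 ≤ R c) : P n V R c ≤ V c / c ^ (n / 2) := by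
  rw [P_eq_div_rpow hc]
  gcongr
  linarith [div_nonneg hR hc.le]

lemma div_rpow_le_two_mul_P (hc : 0 < c) (hnc : n ≤ c) (hV : 0 < V c)
    (hRV : R c ≤ n / 2 * V c) : V c / c ^ (n / 2) ≤ 2 * P n V R c := by
  have hRc : R c / c ≤ V c / 2 := by
    rw [div_le_iff₀ hc]
    nlinarith
  rw [P_eq_div_rpow hc, ← mul_div_assoc]
  gcongr
  linarith

lemma hasDerivAt_P {V' R' : ℝ → ℝ} (hc : 0 < c) (hV : HasDerivAt V (V' c) c)
    (hR : HasDerivAt R (R' c) c) (hode : n / 2 * V c - R c = c * V' c - R' c) :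
    HasDerivAt (P n V R) (R c * (n / 2 + 1 - c) / c ^ (n / 2 + 2)) c := by
  have hpow (p : ℝ) : HasDerivAt (fun x : ℝ => x ^ p) (p * c ^ (p - 1)) c :=
    hasDerivAt_rpow_const (Or.inl hc.ne')
  have hx := (rpow_pos_of_pos hc (n / 2)).ne'
  refine ((hV.div (hpow _) hx).sub (hR.div (hpow _) (rpow_pos_of_pos hc _).ne')).congr_deriv ?_
  rw [add_sub_cancel_right, rpow_add_one hc.ne', rpow_sub_one hc.ne', rpow_add hc _ 2, rpow_two]
  field_simp
  linear_combination (-2 * c) * hode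

lemma neg_two_mul_mul_P_le (hn : 0 ≤ n) (hc : 0 < c) (hnc : n ≤ c) (hV : 0 < V c)
    (hR : 0 ≤ R c) (hRV : R c ≤ n / 2 * V c) :
    -(2 * (R c / (c * V c)) * P n V R c) ≤ R c * (n / 2 + 1 - c) / c ^ (n / 2 + 2) := by
  have hx := rpow_pos_of_pos hc (n / 2)
  have hP := div_rpow_le_two_mul_P hc hnc hV hRV
  have hN : 0 ≤ R c / (c * V c) := by positivity
  have h1 : R c / c ^ (n / 2 + 1) ≤ 2 * (R c / (c * V c)) * P n V R c := by
    calc R c / c ^ (n / 2 + 1) = R c / (c * V c) * (V c / c ^ (n / 2)) := by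
          rw [rpow_add_one hc.ne']
          field_simp
      _ ≤ R c / (c * V c) * (2 * P n V R c) := by gcongr
      _ = 2 * (R c / (c * V c)) * P n V R c := by ring
  have h2 : -(R c / c ^ (n / 2 + 1)) ≤ R c * (n / 2 + 1 - c) / c ^ (n / 2 + 2) := by
    rw [rpow_add hc _ 2, rpow_add_one hc.ne', rpow_two, neg_le, ← neg_div,
      div_le_div_iff₀ (by positivity) (by positivity)]
    nlinarith [mul_nonneg (mul_nonneg hR (mul_nonneg hx.le hc.le))
      (by linarith : (0 : ℝ) ≤ n / 2 + 1)]
  linarith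

lemma div_rpow_le_mul_P_div (hn : 0 ≤ n) (hc : 0 < c) (hnc : n ≤ c) (hV : 0 < V c)
    (hRV : R c ≤ n / 2 * V c) : R c / c ^ (n / 2 + 1) ≤ n * P n V R c / c := by
  have hx := rpow_pos_of_pos hc (n / 2)
  have hP := div_rpow_le_two_mul_P hc hnc hV hRV
  calc R c / c ^ (n / 2 + 1) ≤ n / 2 * V c / c ^ (n / 2 + 1) := by gcongr
    _ = n / 2 * (V c / c ^ (n / 2)) / c := by rw [rpow_add_one hc.ne']; field_simp
    _ ≤ n / 2 * (2 * P n V R c) / c := by gcongr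
    _ = n * P n V R c / c := by ring

lemma P_pos (hc : 0 < c) (hnc : n ≤ c) (hV : 0 < V c) (hRV : R c ≤ n / 2 * V c) :
    0 < P n V R c := by
  have := div_rpow_le_two_mul_P hc hnc hV hRV
  have : 0 < V c / c ^ (n / 2) := by positivity
  linarith

lemma antitoneOn_P {a : ℝ} (ha0 : 0 < a) (ha : n / 2 + 1 ≤ a)
    (hP : ∀ c ≥ a, HasDerivAt (P n V R) (R c * (n / 2 + 1 - c) / c ^ (n / 2 + 2)) c)
    (hR : ∀ c ≥ a, 0 ≤ R c) : AntitoneOn (P n V R) (Ici a) := by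
  refine antitoneOn_of_hasDerivWithinAt_nonpos (convex_Ici a)
    (f' := fun c => R c * (n / 2 + 1 - c) / c ^ (n / 2 + 2))
    (fun c hc => (hP c hc).continuousAt.continuousWithinAt) (fun c hc => ?_) (fun c hc => ?_) <;>
    rw [interior_Ici] at hc
  · exact (hP c hc.le).hasDerivWithinAt
  · have : 0 < c := ha0.trans hc
    exact div_nonpos_of_nonpos_of_nonneg
      (mul_nonpos_of_nonneg_of_nonpos (hR c hc.le) (by linarith [mem_Ioi.1 hc])) (by positivity)

lemma P_mul_exp_neg_integral_le {a : ℝ} (hn : 0 ≤ n) (ha0 : 0 < a) (hna : n ≤ a)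
    (hP : ∀ c ≥ a, HasDerivAt (P n V R) (R c * (n / 2 + 1 - c) / c ^ (n / 2 + 2)) c)
    (hV : ∀ c > a, ContinuousAt V c) (hR : ∀ c > a, ContinuousAt R c)
    (hVpos : ∀ c ≥ a, 0 < V c) (hRnonneg : ∀ c ≥ a, 0 ≤ R c)
    (hRle : ∀ c ≥ a, R c ≤ n / 2 * V c)
    (hconv : IntegrableOn (fun c => R c / (c * V c)) (Ioi a)) (hc : a ≤ c) :
    P n V R a * exp (-2 * ∫ t in Ioi a, R t / (t * V t)) ≤ P n V R c := by
  have hpos (x) (hx : x > a) : 0 < x := ha0.trans hx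
  have hN_cont (x) (hx : x > a) : ContinuousAt (fun t => 2 * (R t / (t * V t))) x :=
    ((hR x hx).div (continuousAt_id.mul (hV x hx))
      (mul_pos (hpos x hx) (hVpos x hx.le)).ne').const_mul 2
  have hN_nonneg (x) (hx : x > a) : 0 ≤ 2 * (R x / (x * V x)) := by
    have := hRnonneg x hx.le; have := hpos x hx; have := hVpos x hx.le; positivity
  have hP' (x) (hx : x > a) :
      -(2 * (R x / (x * V x)) * P n V R x) ≤ R x * (n / 2 + 1 - x) / x ^ (n / 2 + 2) :=
    neg_two_mul_mul_P_le hn (hpos x hx) (hna.trans hx.le) (hVpos x hx.le) (hRnonneg x hx.le)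
      (hRle x hx.le)
  have h := mul_exp_neg_integral_Ioi_le hP (hconv.const_mul 2) hN_cont hN_nonneg hP'
    (P_pos ha0 hna (hVpos a le_rfl) (hRle a le_rfl)).le hc
  rwa [integral_const_mul, ← neg_mul] at h

lemma tendsto_div_rpow_zero {a : ℝ} (hn : 0 ≤ n) (ha0 : 0 < a) (hna : n ≤ a)
    (hanti : AntitoneOn (P n V R) (Ici a)) (hVpos : ∀ c ≥ a, 0 < V c)
    (hRnonneg : ∀ c ≥ a, 0 ≤ R c) (hRle : ∀ c ≥ a, R c ≤ n / 2 * V c) :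
    Tendsto (fun c => R c / c ^ (n / 2 + 1)) atTop (𝓝 0) := by
  refine squeeze_zero' ?_ ?_ ((tendsto_const_nhds (x := n * P n V R a)).div_atTop tendsto_id)
  all_goals filter_upwards [eventually_ge_atTop a] with c hc
  all_goals have hc0 : 0 < c := ha0.trans_le hc
  · have := hRnonneg c hc
    positivity
  · calc R c / c ^ (n / 2 + 1) ≤ n * P n V R c / c :=
          div_rpow_le_mul_P_div hn hc0 (hna.trans hc) (hVpos c hc) (hRle c hc)
      _ ≤ n * P n V R a / c := by gcongr; exact hanti self_mem_Ici hc hc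

end ChowLuYang

open ChowLuYang in
theorem stmt_7 (n : ℝ) (hn : 1 ≤ n) (V R V' R' : ℝ → ℝ)
    (hV : ∀ c ≥ n + 2, HasDerivAt V (V' c) c)
    (hR : ∀ c ≥ n + 2, HasDerivAt R (R' c) c)
    (hVpos : ∀ c ≥ n + 2, 0 < V c)
    (hRnonneg : ∀ c ≥ n + 2, 0 ≤ R c)
    (hRle : ∀ c ≥ n + 2, R c ≤ n / 2 * V c)
    (hode : ∀ c ≥ n + 2, n / 2 * V c - R c = c * V' c - R' c)
    (hconv : IntegrableOn (fun c => R c / (c * V c)) (Set.Ioi (n + 2))) :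
    (∃ L : ℝ, Tendsto (fun c : ℝ => V c / c ^ (n / 2 : ℝ)) atTop (nhds L) ∧ 0 < L) ∧
    (∀ᶠ c in atTop,
      (V (n + 2) / (n + 2) ^ (n / 2 : ℝ) - R (n + 2) / (n + 2) ^ (n / 2 + 1 : ℝ)) *
          Real.exp (-2 * ∫ t in Set.Ioi (n + 2), R t / (t * V t)) ≤
        V c / c ^ (n / 2 : ℝ)) := by
  have hn0 : 0 ≤ n := by linarith
  have hna : n ≤ n + 2 := by linarith
  have hpos : ∀ c ≥ n + 2, 0 < c := fun c hc => by linarith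
  have ha := hpos _ le_rfl
  have hP (c) (hc : c ≥ n + 2) := hasDerivAt_P (hpos c hc) (hV c hc) (hR c hc) (hode c hc)
  have hanti := antitoneOn_P ha (by linarith) hP hRnonneg
  have hlower (c) (hc : c ≥ n + 2) :=
    P_mul_exp_neg_integral_le hn0 ha hna hP
      (fun x hx => (hV x hx.le).continuousAt) (fun x hx => (hR x hx.le).continuousAt)
      hVpos hRnonneg hRle hconv hc
  obtain ⟨L, hL, hKL⟩ := hanti.exists_tendsto_atTop_of_le hlower
  have htail := tendsto_div_rpow_zero hn0 ha hna hanti hVpos hRnonneg hRle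
  refine ⟨⟨L, ?_, ?_⟩, ?_⟩
  · rw [← add_zero L]
    exact (hL.add htail).congr fun c => sub_add_cancel _ _
  · exact (mul_pos (P_pos ha hna (hVpos _ le_rfl) (hRle _ le_rfl)) (exp_pos _)).trans_le hKL
  · filter_upwards [eventually_ge_atTop (n + 2)] with c hc
    exact (hlower c hc).trans (P_le_div_rpow (hpos c hc) (hRnonneg c hc))
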